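/- Let g ≥ 1 and let ρ : H[3](g) → GL(W) be a representation of the finite Heisenberg group H[3](g) on a nonzero finite-dimensional complex vector space W such that ρ(t,0,0) = t·id_W for every t ∈ μ₃, and such that W has no ρ-invariant subspace other than {0} and W. Then ρ is isomorphic as a representation of H[3](g) to the Schrödinger representation (t,x,x*) ↦ U_{(t,x,x*)} on V(g); in particular dim_ℂ W = 3^g. -/

import Mathlib

/-- `ω = exp(2πi/3)`, a primitive cube root of unity. -/
noncomputable def omega : ℂ := Complex.exp (2 * Real.pi * Complex.I / 3)

/-- Standard dot product on `(ℤ/3)^g` with values in `ℤ/3`. -/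
def hdot {g : ℕ} (a b : Fin g → ZMod 3) : ZMod 3 := ∑ i, a i * b i

/-- The Schrödinger operator `U_{(t,x,x*)}` on `V(g) = ((ℤ/3)^g → ℂ)`:
`(U f)(v) = t · ω^{x*·(v−x)} · f(v−x)`. -/
noncomputable def U {g : ℕ} (t : ℂ) (x xs : Fin g → ZMod 3) :
    ((Fin g → ZMod 3) → ℂ) →ₗ[ℂ] ((Fin g → ZMod 3) → ℂ) where
  toFun f := fun v => t * omega ^ (hdot xs (v - x)).val * f (v - x)
  map_add' f f' := by funext v; simp [mul_add]
  map_smul' c f := by funext v; simp [smul_eq_mul]; ring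

/- ## Auxiliary lemmas -/

lemma omega_pow_three : omega ^ 3 = 1 := by
  rw [omega, ← Complex.exp_nat_mul]
  norm_num
  rw [mul_div_cancel₀]
  · exact Complex.exp_two_pi_mul_I
  · norm_num

lemma omega_ne_zero : omega ≠ 0 := Complex.exp_ne_zero _

lemma omega_ne_one : omega ≠ 1 := by
  intro h
  rw [omega, Complex.exp_eq_one_iff] at h
  obtain ⟨n, hn⟩ := h
  rw [div_eq_iff (by norm_num)] at hn
  have hπ : (Real.pi : ℂ) ≠ 0 := by simpa using Real.pi_ne_zero
  have h2 : (2 : ℂ) * Real.pi * Complex.I ≠ 0 := by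
    simp [hπ, Complex.I_ne_zero]
  have h3 : (1 : ℂ) * (2 * Real.pi * Complex.I) = (n * 3) * (2 * Real.pi * Complex.I) := by
    rw [one_mul]; linear_combination hn
  have h3 : (1 : ℂ) = n * 3 := mul_right_cancel₀ h2 h3
  have h4 : ((n : ℤ) : ℂ) * 3 = ((3 * n : ℤ) : ℂ) := by push_cast; ring
  rw [h4] at h3
  have : (1 : ℤ) = 3 * n := by exact_mod_cast h3
  omega

lemma omega_sq_add : omega ^ 2 + omega + 1 = 0 := by
  have h : (omega - 1) * (omega ^ 2 + omega + 1) = 0 := by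
    linear_combination omega_pow_three
  rcases mul_eq_zero.1 h with h1 | h2
  · exact absurd (sub_eq_zero.1 h1) omega_ne_one
  · exact h2

lemma omega_pow_mod (m : ℕ) : omega ^ (m % 3) = omega ^ m := by
  conv_rhs => rw [← Nat.div_add_mod m 3]
  rw [pow_add, pow_mul, omega_pow_three, one_pow, one_mul]

noncomputable def chi (a : ZMod 3) : ℂ := omega ^ a.val

lemma chi_zero : chi 0 = 1 := rfl

lemma chi_add (a b : ZMod 3) : chi (a + b) = chi a * chi b := by
  rw [chi, chi, chi, ZMod.val_add, omega_pow_mod, pow_add]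

lemma chi_ne_zero (a : ZMod 3) : chi a ≠ 0 := pow_ne_zero _ omega_ne_zero

lemma chi_cube (a : ZMod 3) : chi a ^ 3 = 1 := by
  rw [chi, ← pow_mul, mul_comm, pow_mul, omega_pow_three, one_pow]

lemma sum_chi (d : ZMod 3) : ∑ a : ZMod 3, chi (a * d) = if d = 0 then 3 else 0 := by
  have huniv : (Finset.univ : Finset (ZMod 3)) = {0, 1, 2} := by decide
  rw [huniv]
  rw [Finset.sum_insert (by decide), Finset.sum_insert (by decide), Finset.sum_singleton]
  have h1 : (1:ZMod 3).val = 1 := rfl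
  have h2 : (2:ZMod 3).val = 2 := rfl
  have h4 : (4:ZMod 3).val = 1 := rfl
  obtain rfl | rfl | rfl : d = 0 ∨ d = 1 ∨ d = 2 := by revert d; decide
  all_goals simp [chi] <;> norm_num <;> simp only [h1, h2, h4]
  · linear_combination omega_sq_add
  · rw [if_neg (show (2:ZMod 3) ≠ 0 by decide)]; linear_combination omega_sq_add

lemma chi_sum {ι : Type*} (s : Finset ι) (f : ι → ZMod 3) :
    chi (∑ i ∈ s, f i) = ∏ i ∈ s, chi (f i) := by
  classical
  induction s using Finset.induction_on with
  | empty => simp [chi_zero]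
  | insert _ _ h ih => rw [Finset.sum_insert h, Finset.prod_insert h, chi_add, ih]

section hdotlemmas
variable {g : ℕ} (a b c : Fin g → ZMod 3)

lemma hdot_comm : hdot a b = hdot b a := by simp [hdot, mul_comm]
lemma hdot_zero_left : hdot 0 b = 0 := by simp [hdot]
lemma hdot_zero_right : hdot a 0 = 0 := by simp [hdot]
lemma hdot_add_right : hdot a (b + c) = hdot a b + hdot a c := by
  simp [hdot, mul_add, Finset.sum_add_distrib]
lemma hdot_sub_right : hdot a (b - c) = hdot a b - hdot a c := by
  simp [hdot, mul_sub, Finset.sum_sub_distrib]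
lemma hdot_neg_right : hdot a (-b) = - hdot a b := by
  simp [hdot, mul_neg, Finset.sum_neg_distrib]

end hdotlemmas

lemma sum_chi_hdot {g : ℕ} (d : Fin g → ZMod 3) :
    ∑ c : Fin g → ZMod 3, chi (hdot c d) = if d = 0 then (3:ℂ) ^ g else 0 := by
  have key : ∑ c : Fin g → ZMod 3, chi (hdot c d) = ∏ i, ∑ a : ZMod 3, chi (a * d i) := by
    rw [Fintype.prod_sum]
    exact Finset.sum_congr rfl fun c _ => chi_sum _ _
  rw [key]
  by_cases hd : d = 0
  · subst hd
    simp [sum_chi, chi_zero]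
  · obtain ⟨i, hi⟩ : ∃ i, d i ≠ 0 := by
      by_contra h
      push_neg at h
      exact hd (funext h)
    rw [if_neg hd]
    apply Finset.prod_eq_zero (Finset.mem_univ i)
    rw [sum_chi, if_neg hi]

/-- any representation `ρ` of the finite Heisenberg group
`H[3](g) = μ₃ × (ℤ/3)^g × (ℤ/3)^g` (with multiplication
`(t,x,x*)(s,y,y*) = (t·s·ω^{x*·y}, x+y, x*+y*)`) on a nonzero finite-dimensional
complex vector space `W`, on which the center `μ₃` acts by scalar multiplication
and which has no nontrivial invariant subspace, is isomorphic to the Schrödinger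
representation on `V(g)`; in particular `dim W = 3^g`. -/
theorem stmt_5 (g : ℕ) (hg : 1 ≤ g) {W : Type} [AddCommGroup W] [Module ℂ W]
    [FiniteDimensional ℂ W] [Nontrivial W]
    (ρ : ℂ → (Fin g → ZMod 3) → (Fin g → ZMod 3) → (W →ₗ[ℂ] W))
    (hmul : ∀ (t s : ℂ) (x xs y ys : Fin g → ZMod 3), t ^ 3 = 1 → s ^ 3 = 1 →
        ρ (t * s * omega ^ (hdot xs y).val) (x + y) (xs + ys) = ρ t x xs ∘ₗ ρ s y ys)
    (hcen : ∀ t : ℂ, t ^ 3 = 1 → ρ t 0 0 = t • LinearMap.id)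
    (hirr : ∀ p : Submodule ℂ W,
        (∀ (t : ℂ) (x xs : Fin g → ZMod 3), t ^ 3 = 1 → ∀ w ∈ p, ρ t x xs w ∈ p) →
        p = ⊥ ∨ p = ⊤) :
    ∃ e : W ≃ₗ[ℂ] ((Fin g → ZMod 3) → ℂ),
      (∀ (t : ℂ) (x xs : Fin g → ZMod 3), t ^ 3 = 1 → ∀ w : W,
          e (ρ t x xs w) = U t x xs (e w)) ∧
      Module.finrank ℂ W = 3 ^ g := by
  classical
  have h13 : (1:ℂ) ^ 3 = 1 := one_pow 3
  have hid : ρ 1 0 0 = LinearMap.id := by simpa using hcen 1 h13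
  -- scalars move out
  have hscal : ∀ (t : ℂ) (x xs : Fin g → ZMod 3), t ^ 3 = 1 → ρ t x xs = t • ρ 1 x xs := by
    intro t x xs ht
    have h := hmul t 1 0 0 x xs ht h13
    rw [hdot_zero_left] at h
    simp only [ZMod.val_zero, pow_zero, mul_one, zero_add] at h
    rw [h, hcen t ht]
    ext w
    simp
  -- multiplication with the omega factor expressed via chi
  have hmulω : ∀ x xs y ys : Fin g → ZMod 3,
      ρ (chi (hdot xs y)) (x + y) (xs + ys) = ρ 1 x xs ∘ₗ ρ 1 y ys := by
    intro x xs y ys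
    have h := hmul 1 1 x xs y ys h13 h13
    simpa [chi] using h
  have hcomp : ∀ x xs y ys : Fin g → ZMod 3, hdot xs y = 0 →
      ρ 1 (x + y) (xs + ys) = ρ 1 x xs ∘ₗ ρ 1 y ys := by
    intro x xs y ys h
    have h2 := hmulω x xs y ys
    rw [h, chi_zero] at h2
    exact h2
  have hAA : ∀ (xs ys : Fin g → ZMod 3) (w : W),
      ρ 1 0 xs (ρ 1 0 ys w) = ρ 1 0 (xs + ys) w := by
    intro xs ys w
    have h := hcomp 0 xs 0 ys (hdot_zero_right xs)
    simp only [add_zero] at h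
    rw [h]; rfl
  have hBB : ∀ (x y : Fin g → ZMod 3) (w : W),
      ρ 1 x 0 (ρ 1 y 0 w) = ρ 1 (x + y) 0 w := by
    intro x y w
    have h := hcomp x 0 y 0 (hdot_zero_left y)
    simp only [add_zero] at h
    rw [h]; rfl
  have hBA : ∀ x xs : Fin g → ZMod 3, ρ 1 x xs = ρ 1 x 0 ∘ₗ ρ 1 0 xs := by
    intro x xs
    have h := hcomp x 0 0 xs (hdot_zero_left 0)
    simpa only [add_zero, zero_add] using h
  have hrep0 : ∀ (x xs y : Fin g → ZMod 3) (w : W),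
      ρ 1 x xs (ρ 1 y 0 w) = chi (hdot xs y) • ρ 1 (x + y) xs w := by
    intro x xs y w
    have h := hmulω x xs y 0
    rw [hscal _ _ _ (chi_cube _)] at h
    simp only [add_zero] at h
    calc ρ 1 x xs (ρ 1 y 0 w) = (ρ 1 x xs ∘ₗ ρ 1 y 0) w := rfl
      _ = (chi (hdot xs y) • ρ 1 (x + y) xs) w := by rw [← h]
      _ = chi (hdot xs y) • ρ 1 (x + y) xs w := rfl
  -- the projections Q c
  set Q : (Fin g → ZMod 3) → (W →ₗ[ℂ] W) :=
    fun c => ∑ xs : Fin g → ZMod 3, chi (-hdot c xs) • ρ 1 0 xs with hQ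
  have hQapp : ∀ (c : Fin g → ZMod 3) (w : W),
      Q c w = ∑ xs : Fin g → ZMod 3, chi (-hdot c xs) • ρ 1 0 xs w := by
    intro c w
    simp [hQ]
  have hQsum : ∀ w : W, ∑ c : Fin g → ZMod 3, Q c w = ((3:ℂ) ^ g) • w := by
    intro w
    calc ∑ c : Fin g → ZMod 3, Q c w
        = ∑ c : Fin g → ZMod 3, ∑ xs : Fin g → ZMod 3,
            chi (hdot c (-xs)) • ρ 1 0 xs w := by
          refine Finset.sum_congr rfl fun c _ => ?_
          rw [hQapp]
          refine Finset.sum_congr rfl fun xs _ => ?_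
          rw [hdot_neg_right]
      _ = ∑ xs : Fin g → ZMod 3,
            (∑ c : Fin g → ZMod 3, chi (hdot c (-xs))) • ρ 1 0 xs w := by
          rw [Finset.sum_comm]
          refine Finset.sum_congr rfl fun xs _ => ?_
          rw [Finset.sum_smul]
      _ = ∑ xs : Fin g → ZMod 3,
            (if xs = (0 : Fin g → ZMod 3) then (3:ℂ) ^ g else 0) • ρ 1 0 xs w := by
          refine Finset.sum_congr rfl fun xs _ => ?_
          rw [sum_chi_hdot]
          congr 1
          simp [neg_eq_zero]
      _ = ((3:ℂ) ^ g) • w := by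
          rw [Finset.sum_eq_single (0 : Fin g → ZMod 3)]
          · rw [if_pos rfl, hid]; rfl
          · intro b _ hb; rw [if_neg hb, zero_smul]
          · intro h; exact absurd (Finset.mem_univ _) h
  have hQeig : ∀ (c v : Fin g → ZMod 3) (w : W),
      (∀ xs, ρ 1 0 xs w = chi (hdot xs v) • w) →
      Q c w = (if v = c then (3:ℂ) ^ g else 0) • w := by
    intro c v w hw
    calc Q c w = ∑ xs : Fin g → ZMod 3, chi (hdot xs (v - c)) • w := by
          rw [hQapp]
          refine Finset.sum_congr rfl fun xs _ => ?_
          rw [hw, smul_smul, ← chi_add, hdot_sub_right]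
          congr 2
          rw [hdot_comm c xs]
          ring
      _ = (∑ xs : Fin g → ZMod 3, chi (hdot xs (v - c))) • w := by
          rw [Finset.sum_smul]
      _ = (if v = c then (3:ℂ) ^ g else 0) • w := by
          rw [sum_chi_hdot]
          congr 1
          simp [sub_eq_zero]
  -- find a joint eigenvector
  obtain ⟨w1, hw1⟩ := exists_ne (0 : W)
  have hex : ∃ c : Fin g → ZMod 3, Q c w1 ≠ 0 := by
    by_contra h
    push_neg at h
    have h2 := hQsum w1
    rw [Finset.sum_congr rfl (fun c _ => h c), Finset.sum_const, smul_zero] at h2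
    exact hw1 (by
      have h3 : ((3:ℂ) ^ g) ≠ 0 := pow_ne_zero _ (by norm_num)
      have := h2.symm
      exact (smul_eq_zero.mp this).resolve_left h3)
  obtain ⟨c, hc⟩ := hex
  set p : W := Q c w1 with hp
  -- p is a joint eigenvector with character xs ↦ chi (hdot xs c)
  have hp_eig : ∀ xs : Fin g → ZMod 3, ρ 1 0 xs p = chi (hdot xs c) • p := by
    intro xs
    rw [hp]
    conv_lhs => rw [hQapp, map_sum]
    calc ∑ ys : Fin g → ZMod 3, ρ 1 0 xs (chi (-hdot c ys) • ρ 1 0 ys w1)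
        = ∑ ys : Fin g → ZMod 3, chi (-hdot c ys) • ρ 1 0 (xs + ys) w1 := by
          refine Finset.sum_congr rfl fun ys _ => ?_
          rw [map_smul, hAA]
      _ = ∑ zs : Fin g → ZMod 3, chi (-hdot c (zs - xs)) • ρ 1 0 zs w1 := by
          refine Fintype.sum_equiv (Equiv.addLeft xs) _ _ fun ys => ?_
          simp only [Equiv.coe_addLeft]
          rw [add_sub_cancel_left]
      _ = ∑ zs : Fin g → ZMod 3, chi (hdot xs c) • (chi (-hdot c zs) • ρ 1 0 zs w1) := by
          refine Finset.sum_congr rfl fun zs _ => ?_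
          rw [smul_smul, ← chi_add, hdot_sub_right]
          congr 2
          rw [hdot_comm xs c]
          ring
      _ = chi (hdot xs c) • Q c w1 := by
          rw [hQapp c w1, Finset.smul_sum]
  have hp_ne : p ≠ 0 := hc
  -- shift to trivial character
  set w0 : W := ρ 1 (-c) 0 p with hw0
  have hw0_ne : w0 ≠ 0 := by
    intro h
    apply hp_ne
    have h2 : ρ 1 c 0 w0 = p := by
      rw [hw0, hBB, add_neg_cancel]
      have : ρ 1 (0 : Fin g → ZMod 3) 0 p = (LinearMap.id : W →ₗ[ℂ] W) p := by rw [hid]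
      simpa using this
    rw [h, map_zero] at h2
    exact h2.symm
  have hfix : ∀ xs : Fin g → ZMod 3, ρ 1 0 xs w0 = w0 := by
    intro xs
    rw [hw0]
    have h1 : ρ 1 0 xs (ρ 1 (-c) 0 p) = chi (hdot xs (-c)) • ρ 1 (0 + -c) xs p :=
      hrep0 0 xs (-c) p
    rw [h1, zero_add]
    have h2 : ρ 1 (-c) xs p = chi (hdot xs c) • ρ 1 (-c) 0 p := by
      have h3 : ρ 1 (-c) xs p = ρ 1 (-c) 0 (ρ 1 0 xs p) := by rw [hBA]; rfl
      rw [h3, hp_eig, map_smul]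
    rw [h2, smul_smul, ← chi_add, hdot_neg_right]
    simp [chi_zero]
  -- the orbit vectors
  set u : (Fin g → ZMod 3) → W := fun v => ρ 1 v 0 w0 with hu
  have hu_ne : ∀ v, u v ≠ 0 := by
    intro v h
    apply hw0_ne
    have h2 : ρ 1 (-v) 0 (u v) = w0 := by
      rw [hu, hBB, neg_add_cancel]
      have : ρ 1 (0 : Fin g → ZMod 3) 0 w0 = (LinearMap.id : W →ₗ[ℂ] W) w0 := by rw [hid]
      simpa using this
    rw [h, map_zero] at h2
    exact h2.symm
  have hrep : ∀ (t : ℂ) (x xs : Fin g → ZMod 3), t ^ 3 = 1 → ∀ v,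
      ρ t x xs (u v) = (t * chi (hdot xs v)) • u (x + v) := by
    intro t x xs ht v
    rw [hscal t x xs ht]
    have h1 : ρ 1 x xs (u v) = chi (hdot xs v) • ρ 1 (x + v) xs w0 := hrep0 x xs v w0
    have h2 : ρ 1 (x + v) xs w0 = u (x + v) := by
      have h3 : ρ 1 (x + v) xs w0 = ρ 1 (x + v) 0 (ρ 1 0 xs w0) := by rw [hBA]; rfl
      rw [h3, hfix]
    calc (t • ρ 1 x xs) (u v) = t • (ρ 1 x xs (u v)) := rfl
      _ = t • (chi (hdot xs v) • u (x + v)) := by rw [h1, h2]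
      _ = (t * chi (hdot xs v)) • u (x + v) := by rw [smul_smul]
  have hAu : ∀ (xs v : Fin g → ZMod 3), ρ 1 0 xs (u v) = chi (hdot xs v) • u v := by
    intro xs v
    have h := hrep 1 0 xs h13 v
    simpa using h
  -- the intertwining map T
  set T : ((Fin g → ZMod 3) → ℂ) →ₗ[ℂ] W :=
    ∑ v : Fin g → ZMod 3, LinearMap.smulRight (LinearMap.proj v) (u v) with hTdef
  have hT : ∀ f : (Fin g → ZMod 3) → ℂ, T f = ∑ v : Fin g → ZMod 3, f v • u v := by
    intro f
    simp [hTdef]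
  have hTint : ∀ (t : ℂ) (x xs : Fin g → ZMod 3), t ^ 3 = 1 →
      ∀ f, ρ t x xs (T f) = T (U t x xs f) := by
    intro t x xs ht f
    rw [hT, map_sum, hT]
    calc ∑ v : Fin g → ZMod 3, ρ t x xs (f v • u v)
        = ∑ v : Fin g → ZMod 3, (t * chi (hdot xs v) * f v) • u (x + v) := by
          refine Finset.sum_congr rfl fun v _ => ?_
          rw [map_smul, hrep t x xs ht, smul_smul]
          congr 1
          ring
      _ = ∑ v : Fin g → ZMod 3, (U t x xs f) v • u v := by
          refine Fintype.sum_equiv (Equiv.addLeft x) _ _ fun v => ?_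
          simp only [Equiv.coe_addLeft]
          have hUv : (U t x xs f) (x + v) = t * chi (hdot xs v) * f v := by
            show t * omega ^ (hdot xs (x + v - x)).val * f (x + v - x)
              = t * chi (hdot xs v) * f v
            rw [add_sub_cancel_left]
            rfl
          rw [hUv]
  -- injectivity
  have hTzero : ∀ f : (Fin g → ZMod 3) → ℂ, T f = 0 → f = 0 := by
    intro f hf
    funext v0
    have h1 : Q v0 (T f) = 0 := by rw [hf, map_zero]
    have h2 : Q v0 (T f) = ((3:ℂ) ^ g * f v0) • u v0 := by
      rw [hT, map_sum]
      calc ∑ v : Fin g → ZMod 3, Q v0 (f v • u v)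
          = ∑ v : Fin g → ZMod 3, f v • ((if v = v0 then (3:ℂ) ^ g else 0) • u v) := by
            refine Finset.sum_congr rfl fun v _ => ?_
            rw [map_smul, hQeig v0 v (u v) (fun xs => hAu xs v)]
        _ = ((3:ℂ) ^ g * f v0) • u v0 := by
            rw [Finset.sum_eq_single v0]
            · rw [if_pos rfl, smul_smul, mul_comm]
            · intro b _ hb; rw [if_neg hb, zero_smul, smul_zero]
            · intro h; exact absurd (Finset.mem_univ _) h
    rw [h1] at h2
    have h3 : (3:ℂ) ^ g * f v0 = 0 := by
      by_contra h
      exact hu_ne v0 ((smul_eq_zero.mp h2.symm).resolve_left h)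
    have h4 : ((3:ℂ) ^ g) ≠ 0 := pow_ne_zero _ (by norm_num)
    have := mul_eq_zero.mp h3
    simpa [h4] using this
  have hTinj : Function.Injective T := by
    intro a b hab
    have h := hTzero (a - b) (by rw [map_sub, hab, sub_self])
    exact sub_eq_zero.mp h
  -- surjectivity
  have hrange : LinearMap.range T = ⊤ := by
    have hinv : ∀ (t : ℂ) (x xs : Fin g → ZMod 3), t ^ 3 = 1 →
        ∀ w ∈ LinearMap.range T, ρ t x xs w ∈ LinearMap.range T := by
      intro t x xs ht w hw
      obtain ⟨f, rfl⟩ := hw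
      exact ⟨U t x xs f, (hTint t x xs ht f).symm⟩
    rcases hirr (LinearMap.range T) hinv with h | h
    · exfalso
      have hmem : w0 ∈ LinearMap.range T := by
        refine ⟨Pi.single (0 : Fin g → ZMod 3) (1:ℂ), ?_⟩
        rw [hT, Finset.sum_eq_single (0 : Fin g → ZMod 3)]
        · rw [Pi.single_eq_same, one_smul]
          show ρ 1 0 0 w0 = w0
          rw [hid]; rfl
        · intro b _ hb
          rw [Pi.single_eq_of_ne hb, zero_smul]
        · intro h2; exact absurd (Finset.mem_univ _) h2
      rw [h] at hmem
      exact hw0_ne (by simpa using hmem)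
    · exact h
  have hTsurj : Function.Surjective T := LinearMap.range_eq_top.mp hrange
  -- assemble the equivalence
  set E : ((Fin g → ZMod 3) → ℂ) ≃ₗ[ℂ] W := LinearEquiv.ofBijective T ⟨hTinj, hTsurj⟩ with hE
  have hEapp : ∀ f, E f = T f := fun f => rfl
  refine ⟨E.symm, fun t x xs ht w => ?_, ?_⟩
  · apply E.injective
    rw [LinearEquiv.apply_symm_apply]
    have h2 : E (U t x xs (E.symm w)) = ρ t x xs (E (E.symm w)) := by
      rw [hEapp, hEapp, ← hTint t x xs ht]
    rw [h2, LinearEquiv.apply_symm_apply]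
  · rw [LinearEquiv.finrank_eq E.symm, Module.finrank_fintype_fun_eq_card]
    simp [Fintype.card_fun]
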